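/- The outer-bound expression is nondecreasing in the per-symbol cost constraint: if 0 < B ≤ B', then U_B(L) ≤ U_{B'}(L) for every integer L ≥ 1. -/

import Mathlib

open Finset Filter Topology

/-- Binary entropy function with base-2 logarithm. `Real.logb 2 0 = 0`, so
`H2 0 = H2 1 = 0` automatically. -/
noncomputable def H2 (p : ℝ) : ℝ :=
  -(p * Real.logb 2 p) - (1 - p) * Real.logb 2 (1 - p)

/-- Partial sums `s_j = ∑_{k=1}^j c_k` of the beam-budget sequence. -/
noncomputable def s (K B : ℝ) : ℕ → ℝ
  | 0 => 0
  | (j+1) => s K B j + min ((K - s K B j) / 2) B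

/-- The beam-budget sequence: `c_0 = 0` and `c_j = min((K - s_{j-1})/2, B)` for `j ≥ 1`. -/
noncomputable def c (K B : ℝ) : ℕ → ℝ
  | 0 => 0
  | (j+1) => min ((K - s K B j) / 2) B

/-- The `j`-th term of the outer bound (Theorem 1), for `j ≥ 1`. -/
noncomputable def t (K B : ℝ) (j : ℕ) : ℝ :=
  (1 - s K B (j-1) / K) * H2 (c K B j / (K - s K B (j-1))) + s K B (j-1) / K

/-- The outer-bound (Theorem 1) expression `U(L)`. -/
noncomputable def U (K B : ℝ) (L : ℕ) : ℝ :=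
  (1 / (L : ℝ)) * ∑ j ∈ Finset.Icc 1 L, t K B j

/-- The `j`-th eavesdropper-leakage term, for `j ≥ 1` (natural subtraction makes the
middle term vanish at `j = 1` and the final sum empty for `j ≤ 3`). -/
noncomputable def g (K B : ℝ) (j : ℕ) : ℝ :=
  ((K - s K B (j-1)) / K) * H2 (c K B j / K)
  + (c K B (j-1) * (K - s K B (j-2)) / K^2) *
      H2 ((1/2) * c K B (j-1) / (K - s K B (j-2)))
  + ∑ k ∈ Finset.Icc 1 (j-3),
      (1/K) * ((c K B (k+1))^2 / K^2) * (1/2 : ℝ)^(2*(j-k-2)-1)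

/-- The gap `G(L)` between the outer and inner bounds. -/
noncomputable def G (K B : ℝ) (L : ℕ) : ℝ :=
  (1 / (L : ℝ)) * ∑ j ∈ Finset.Icc 1 L, g K B j

/-- The inner-bound (Theorem 2) expression `I(L) = U(L) - G(L)`. -/
noncomputable def Ib (K B : ℝ) (L : ℕ) : ℝ := U K B L - G K B L

/-! The `j`-th term of the outer bound equals `1 - (1 - s_{j-1}/K) * (1 - H₂ p_j)` with
`p_j = c_j / (K - s_{j-1}) = min (1/2) (β / (K - s_{j-1}))`. Raising the cost `β` raises
`s_{j-1}` (the recursion `s_{j+1} = min ((K + s_j)/2) (s_j + β)` is monotone in `s_j` and `β`)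
and hence also `p_j`; as `H₂ ≤ 1` is increasing on `[0, 1/2]`, both factors of the product are
nonnegative and shrink, so every term grows. -/

lemma H2_eq_binEntropy_div_log_two (p : ℝ) : H2 p = Real.binEntropy p / Real.log 2 := by
  unfold H2 Real.binEntropy Real.logb
  rw [Real.log_inv, Real.log_inv]
  ring

lemma H2_le_one (p : ℝ) : H2 p ≤ 1 := by
  rw [H2_eq_binEntropy_div_log_two, div_le_one (Real.log_pos one_lt_two)]
  exact Real.binEntropy_le_log_two

lemma H2_monotoneOn : MonotoneOn H2 (Set.Icc 0 2⁻¹) := by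
  intro p hp q hq hpq
  rw [H2_eq_binEntropy_div_log_two, H2_eq_binEntropy_div_log_two]
  exact div_le_div_of_nonneg_right (Real.binEntropy_strictMonoOn.monotoneOn hp hq hpq)
    (Real.log_pos one_lt_two).le

lemma s_succ_eq_min (K B : ℝ) (j : ℕ) :
    s K B (j + 1) = min ((K + s K B j) / 2) (s K B j + B) := by
  rw [s, ← min_add_add_left]
  ring_nf

lemma s_monotone (K : ℝ) (j : ℕ) : Monotone fun B => s K B j := by
  intro B B' hBB'
  induction j with
  | zero => rfl
  | succ j ih =>
    simp only [s_succ_eq_min]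
    exact min_le_min (by linarith) (by linarith)

lemma s_lt {K : ℝ} (hK : 0 < K) (B : ℝ) (j : ℕ) : s K B j < K := by
  induction j with
  | zero => exact hK
  | succ j ih =>
    rw [s_succ_eq_min]
    exact (min_le_left _ _).trans_lt (by linarith)

lemma c_succ_div_eq_min {K B : ℝ} {j : ℕ} (hs : s K B j < K) :
    c K B (j + 1) / (K - s K B j) = min 2⁻¹ (B / (K - s K B j)) := by
  have hpos : 0 < K - s K B j := sub_pos.mpr hs
  rw [c, ← min_div_div_right hpos.le]
  congr 1
  field_simp

lemma t_succ_eq_one_sub_mul (K B : ℝ) (j : ℕ) :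
    t K B (j + 1) = 1 - (1 - s K B j / K) * (1 - H2 (c K B (j + 1) / (K - s K B j))) := by
  simp only [t, Nat.add_sub_cancel]
  ring

lemma t_succ_monotoneOn {K : ℝ} (hK : 0 < K) (j : ℕ) :
    MonotoneOn (fun B => t K B (j + 1)) (Set.Ici 0) := by
  intro B (hB : 0 ≤ B) B' (hB' : 0 ≤ B') hBB'
  have hs : s K B j ≤ s K B' j := s_monotone K j hBB'
  have hsK : s K B j < K := s_lt hK B j
  have hsK' : s K B' j < K := s_lt hK B' j
  have hp : min 2⁻¹ (B / (K - s K B j)) ≤ min 2⁻¹ (B' / (K - s K B' j)) :=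
    min_le_min le_rfl (div_le_div₀ hB' hBB' (sub_pos.mpr hsK') (by linarith))
  have hH : H2 (min 2⁻¹ (B / (K - s K B j))) ≤ H2 (min 2⁻¹ (B' / (K - s K B' j))) :=
    H2_monotoneOn ⟨le_min (by norm_num) (div_nonneg hB (by linarith)), min_le_left _ _⟩
      ⟨le_min (by norm_num) (div_nonneg hB' (by linarith)), min_le_left _ _⟩ hp
  have hfrac : s K B j / K ≤ s K B' j / K := div_le_div_of_nonneg_right hs hK.le
  have hfrac_lt : s K B j / K < 1 := (div_lt_one hK).mpr hsK
  simp only [t_succ_eq_one_sub_mul, c_succ_div_eq_min hsK, c_succ_div_eq_min hsK']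
  exact sub_le_sub_left (mul_le_mul (by linarith) (by linarith)
    (by linarith [H2_le_one (min 2⁻¹ (B' / (K - s K B' j)))]) (by linarith)) 1

lemma U_monotoneOn {K : ℝ} (hK : 0 < K) (L : ℕ) : MonotoneOn (fun B => U K B L) (Set.Ici 0) := by
  intro B hB B' hB' hBB'
  simp only [U]
  gcongr with j hj
  obtain ⟨i, rfl⟩ : ∃ i, j = i + 1 := Nat.exists_eq_add_one.mpr (Finset.mem_Icc.mp hj).1
  exact t_succ_monotoneOn hK i hB hB' hBB'

theorem stmt_9 (K : ℕ) (hK : 2 ≤ K) (B B' : ℝ) (hB : 0 < B) (hBB' : B ≤ B') :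
    ∀ L : ℕ, 1 ≤ L → U K B L ≤ U K B' L := by
  intro L _
  have hK_pos : (0 : ℝ) < K := by exact_mod_cast (by omega : 0 < K)
  exact U_monotoneOn hK_pos L hB.le (hB.le.trans hBB') hBB'
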